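/- arXiv:2205.11421 — 4 statements merged into one kernel-verified Lean document; each statement's English description precedes it below -/
import Mathlib

section
/- For every η ∈ (0,1) and b > 1, provided p = ω(n^{-2}·log n), the random 3-uniform hypergraph H^3(n,p) is (η, b, p)-upper-uniform with probability at least 1 − e^{−ω(n·log n)}; that is, for every constant K > 0, for all sufficiently large n the probability that H^3(n,p) fails to be (η, b, p)-upper-uniform is at most e^{−K·n·log n}. -/
open Finset

/-- The set of all 3-element subsets of `Fin n` (potential edges of a 3-uniform
hypergraph on vertex set `[n]`). -/
def triples (n : ℕ) : Finset (Finset (Fin n)) := Finset.univ.powersetCard 3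

open Classical in
/-- The probability that the binomial random 3-uniform hypergraph `H³(n,p)`
(each 3-set an edge independently with probability `p`) satisfies `P`. -/
noncomputable def probH3 (n : ℕ) (p : ℝ) (P : Finset (Finset (Fin n)) → Prop) : ℝ :=
  ∑ G ∈ (triples n).powerset,
    if P G then p ^ G.card * (1 - p) ^ ((triples n).card - G.card) else 0

open Classical in
/-- The probability, over the joint (independent) choice of `H³(n,p)` and of a
uniformly random `m`-element vertex subset `W`, that `P` holds. -/
noncomputable def probH3W (n : ℕ) (p : ℝ) (m : ℕ)
    (P : Finset (Finset (Fin n)) → Finset (Fin n) → Prop) : ℝ :=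
  ∑ G ∈ (triples n).powerset, ∑ W ∈ (Finset.univ : Finset (Fin n)).powersetCard m,
    if P G W then (p ^ G.card * (1 - p) ^ ((triples n).card - G.card)) / (n.choose m) else 0

variable {α : Type*} [DecidableEq α]

/-- `deg_G(S)`: the number of edges of `G` containing `S`. -/
def degSet (G : Finset (Finset α)) (S : Finset α) : ℕ :=
  (G.filter fun e => S ⊆ e).card

/-- `deg_G(S, W)`: number of edges containing `S` whose remaining vertices lie in `W`. -/
def degSetIn (G : Finset (Finset α)) (S W : Finset α) : ℕ :=
  (G.filter fun e => S ⊆ e ∧ e \ S ⊆ W).card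

/-- `e_G(X,Y,Z)`: the number of triples `(x,y,z) ∈ X × Y × Z` with `{x,y,z} ∈ G`. -/
def tripleCount (G : Finset (Finset α)) (X Y Z : Finset α) : ℕ :=
  ((X ×ˢ Y ×ˢ Z).filter fun t => ({t.1, t.2.1, t.2.2} : Finset α) ∈ G).card

/-- `e_G(Ps, W)`: the number of pairs `(P, w) ∈ Ps × W` with `P ∪ {w} ∈ G`. -/
def pairCount (G : Finset (Finset α)) (Ps : Finset (Finset α)) (W : Finset α) : ℕ :=
  ((Ps ×ˢ W).filter fun q => insert q.2 q.1 ∈ G).card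

/-- `e_G(X, Ps)`: the number of pairs `(x, P) ∈ X × Ps` with `{x} ∪ P ∈ G`. -/
def vertexPairCount (G : Finset (Finset α)) (X : Finset α) (Ps : Finset (Finset α)) : ℕ :=
  ((X ×ˢ Ps).filter fun q => insert q.1 q.2 ∈ G).card

/-- A loose path of length `ℓ` in `G`, with vertex sequence `v 0, …, v (2ℓ)`:
the vertices are distinct and `{v (2i), v (2i+1), v (2i+2)} ∈ G` for all `i < ℓ`. -/
def IsLoosePath (G : Finset (Finset α)) (ℓ : ℕ) (v : ℕ → α) : Prop :=
  (∀ i ≤ 2 * ℓ, ∀ j ≤ 2 * ℓ, v i = v j → i = j) ∧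
  ∀ i < ℓ, ({v (2 * i), v (2 * i + 1), v (2 * i + 2)} : Finset α) ∈ G

/-- The vertex set of a loose path of length `ℓ` with vertex sequence `v`. -/
def pathVerts (ℓ : ℕ) (v : ℕ → α) : Finset α := (Finset.range (2 * ℓ + 1)).image v

/-- The internal vertices of a loose path of length `ℓ` (everything except the two endpoints). -/
def intVerts (ℓ : ℕ) (v : ℕ → α) : Finset α := (Finset.Ioo 0 (2 * ℓ)).image v

/-- `G` has a loose Hamilton cycle: a cyclic ordering `f` of all `n` vertices such
that `{f(2i), f(2i+1), f(2i+2)}` is an edge for every `0 ≤ i < n/2` (indices mod `n`). -/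
def HasLooseHamCycle {n : ℕ} (G : Finset (Finset (Fin n))) : Prop :=
  ∃ f : ZMod n → Fin n, Function.Bijective f ∧
    ∀ i : ℕ, i < n / 2 →
      ({f ((2 * i : ℕ) : ZMod n), f ((2 * i + 1 : ℕ) : ZMod n),
        f ((2 * i + 2 : ℕ) : ZMod n)} : Finset (Fin n)) ∈ G


/-- A 3-uniform hypergraph on `Fin n` is `(η, b, p)`-upper-uniform if every three
pairwise disjoint sets of size at least `η·n` span edge density at most `b·p`. -/
def UpperUniform {n : ℕ} (G : Finset (Finset (Fin n))) (η b p : ℝ) : Prop :=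
  ∀ V₁ V₂ V₃ : Finset (Fin n),
    Disjoint V₁ V₂ → Disjoint V₁ V₃ → Disjoint V₂ V₃ →
    η * n ≤ (V₁.card : ℝ) → η * n ≤ (V₂.card : ℝ) → η * n ≤ (V₃.card : ℝ) →
    (tripleCount G V₁ V₂ V₃ : ℝ) ≤ b * p * (V₁.card * V₂.card * V₃.card)

section Aux
open Classical

noncomputable def wt (n : ℕ) (p : ℝ) (G : Finset (Finset (Fin n))) : ℝ :=
  p ^ G.card * (1 - p) ^ ((triples n).card - G.card)

lemma wt_nonneg {n : ℕ} {p : ℝ} (hp0 : 0 ≤ p) (hp1 : p ≤ 1) (G : Finset (Finset (Fin n))) :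
    0 ≤ wt n p G := by
  have : (0:ℝ) ≤ 1 - p := by linarith
  exact mul_nonneg (pow_nonneg hp0 _) (pow_nonneg this _)

open Classical in
lemma probH3_eq_wt (n : ℕ) (p : ℝ) (P : Finset (Finset (Fin n)) → Prop) :
    probH3 n p P = ∑ G ∈ (triples n).powerset, if P G then wt n p G else 0 := rfl

open Classical in
lemma probH3_mono {n : ℕ} {p : ℝ} (hp0 : 0 ≤ p) (hp1 : p ≤ 1)
    {P Q : Finset (Finset (Fin n)) → Prop} (h : ∀ G, P G → Q G) :
    probH3 n p P ≤ probH3 n p Q := by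
  rw [probH3_eq_wt, probH3_eq_wt]
  refine Finset.sum_le_sum fun G _ => ?_
  by_cases hP : P G
  · simp [hP, h G hP]
  · simp only [hP, if_false]
    split
    · exact wt_nonneg hp0 hp1 G
    · exact le_rfl

open Classical in
lemma probH3_union {n : ℕ} {p : ℝ} (hp0 : 0 ≤ p) (hp1 : p ≤ 1)
    {ι : Type*} (s : Finset ι) (Q : ι → Finset (Finset (Fin n)) → Prop)
    {P : Finset (Finset (Fin n)) → Prop} (h : ∀ G, P G → ∃ i ∈ s, Q i G) :
    probH3 n p P ≤ ∑ i ∈ s, probH3 n p (Q i) := by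
  simp only [probH3_eq_wt]
  rw [Finset.sum_comm]
  refine Finset.sum_le_sum fun G _ => ?_
  by_cases hP : P G
  · obtain ⟨i, his, hQ⟩ := h G hP
    calc (if P G then wt n p G else 0) = (if Q i G then wt n p G else 0) := by simp [hP, hQ]
    _ ≤ ∑ i ∈ s, (if Q i G then wt n p G else 0) :=
      Finset.single_le_sum (f := fun i => if Q i G then wt n p G else 0)
        (fun j _ => by by_cases hj : Q j G <;> simp [hj, wt_nonneg hp0 hp1 G]) his
  · simp only [hP, if_false]
    refine Finset.sum_nonneg fun j _ => ?_
    split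
    · exact wt_nonneg hp0 hp1 G
    · exact le_rfl

lemma mgf {n : ℕ} (p : ℝ) (T : Finset (Finset (Fin n))) (hT : T ⊆ triples n) (x : ℝ) :
    ∑ G ∈ (triples n).powerset, wt n p G * x ^ (G ∩ T).card
      = (1 - p + p * x) ^ T.card := by
  classical
  have key := Finset.prod_add (fun e : Finset (Fin n) => if e ∈ T then p * x else p)
    (fun _ => 1 - p) (triples n)
  have hrhs : ∏ e ∈ triples n, ((if e ∈ T then p * x else p) + (1 - p))
      = (1 - p + p * x) ^ T.card := by
    rw [← Finset.prod_sdiff hT]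
    have h1 : ∏ e ∈ triples n \ T, ((if e ∈ T then p * x else p) + (1 - p)) = 1 := by
      refine Finset.prod_eq_one fun e he => ?_
      rw [Finset.mem_sdiff] at he
      rw [if_neg he.2]; ring
    have h2 : ∏ e ∈ T, ((if e ∈ T then p * x else p) + (1 - p)) = (1 - p + p * x) ^ T.card :=
      Finset.prod_eq_pow_card fun e he => by rw [if_pos he]; ring
    rw [h1, h2, one_mul]
  have hlhs : ∀ G ∈ (triples n).powerset,
      (∏ e ∈ G, (if e ∈ T then p * x else p)) * ∏ e ∈ triples n \ G, (1 - p)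
        = wt n p G * x ^ (G ∩ T).card := by
    intro G hG
    rw [Finset.mem_powerset] at hG
    have hsplit : (∏ e ∈ G, (if e ∈ T then p * x else p))
        = p ^ G.card * x ^ (G ∩ T).card := by
      rw [← Finset.prod_filter_mul_prod_filter_not G (· ∈ T)]
      have e1 : ∏ e ∈ G.filter (· ∈ T), (if e ∈ T then p * x else p)
          = (p * x) ^ (G.filter (· ∈ T)).card :=
        Finset.prod_eq_pow_card fun e he => if_pos (Finset.mem_filter.mp he).2
      have e2 : ∏ e ∈ G.filter (fun e => ¬ e ∈ T), (if e ∈ T then p * x else p)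
          = p ^ (G.filter (fun e => ¬ e ∈ T)).card :=
        Finset.prod_eq_pow_card fun e he => if_neg (Finset.mem_filter.mp he).2
      have hcards : (G.filter (· ∈ T)).card + (G.filter (fun e => ¬ e ∈ T)).card = G.card :=
        Finset.card_filter_add_card_filter_not _
      have hint : (G.filter (· ∈ T)) = G ∩ T := Finset.filter_mem_eq_inter
      rw [e1, e2, ← hint, ← hcards, pow_add, mul_pow]
      ring
    rw [hsplit, Finset.prod_const, Finset.card_sdiff_of_subset hG, wt]
    ring
  rw [Finset.sum_congr rfl hlhs] at key
  rw [← key, hrhs]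

open Classical in
lemma probH3_chernoff {n : ℕ} {p : ℝ} (hp0 : 0 ≤ p) (hp1 : p ≤ 1)
    (T : Finset (Finset (Fin n))) (hT : T ⊆ triples n) {b r : ℝ} (hb : 1 < b) (hr : 0 ≤ r) :
    probH3 n p (fun G => r < ((G ∩ T).card : ℝ))
      ≤ Real.exp (-(r * Real.log b) + p * (b - 1) * T.card) := by
  have hb0 : (0:ℝ) < b := by linarith
  have hlogb : 0 ≤ Real.log b := Real.log_nonneg hb.le
  have step1 : probH3 n p (fun G => r < ((G ∩ T).card : ℝ))
      ≤ Real.exp (-(r * Real.log b)) * ∑ G ∈ (triples n).powerset, wt n p G * b ^ (G ∩ T).card := by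
    rw [probH3_eq_wt, Finset.mul_sum]
    refine Finset.sum_le_sum fun G _ => ?_
    by_cases hE : r < ((G ∩ T).card : ℝ)
    · simp only [hE, if_true]
      have h1 : Real.exp (r * Real.log b) ≤ b ^ (G ∩ T).card := by
        calc Real.exp (r * Real.log b) ≤ Real.exp (((G ∩ T).card : ℝ) * Real.log b) :=
              Real.exp_le_exp.mpr (by nlinarith)
          _ = b ^ (G ∩ T).card := by
            rw [← Real.log_pow, Real.exp_log (by positivity)]
      have hw := wt_nonneg hp0 hp1 G
      calc wt n p G = (Real.exp (-(r * Real.log b)) * Real.exp (r * Real.log b)) * wt n p G := by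
            rw [← Real.exp_add]; simp
        _ ≤ Real.exp (-(r * Real.log b)) * (wt n p G * b ^ (G ∩ T).card) := by
            rw [mul_assoc]
            refine mul_le_mul_of_nonneg_left ?_ (Real.exp_pos _).le
            rw [mul_comm]
            exact mul_le_mul_of_nonneg_left h1 hw
    · simp only [hE, if_false]
      exact mul_nonneg (Real.exp_pos _).le
        (mul_nonneg (wt_nonneg hp0 hp1 G) (by positivity))
  have step2 : ∑ G ∈ (triples n).powerset, wt n p G * b ^ (G ∩ T).card
      ≤ Real.exp (p * (b - 1) * T.card) := by
    rw [mgf p T hT b]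
    have h1 : (0:ℝ) ≤ 1 - p + p * b := by nlinarith
    have h2 : 1 - p + p * b ≤ Real.exp (p * (b - 1)) := by
      have := Real.add_one_le_exp (p * (b - 1))
      linarith
    calc (1 - p + p * b) ^ T.card ≤ Real.exp (p * (b - 1)) ^ T.card :=
          pow_le_pow_left₀ h1 h2 _
      _ = Real.exp (p * (b - 1) * T.card) := by
          rw [← Real.exp_nat_mul]; ring_nf
  calc probH3 n p (fun G => r < ((G ∩ T).card : ℝ))
      ≤ Real.exp (-(r * Real.log b)) * Real.exp (p * (b - 1) * T.card) := by
        refine le_trans step1 ?_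
        exact mul_le_mul_of_nonneg_left step2 (Real.exp_pos _).le
    _ = Real.exp (-(r * Real.log b) + p * (b - 1) * T.card) := (Real.exp_add _ _).symm
end Aux


section Aux2
open Classical

lemma triple_injOn {n : ℕ} {V₁ V₂ V₃ : Finset (Fin n)}
    (h12 : Disjoint V₁ V₂) (h13 : Disjoint V₁ V₃) (h23 : Disjoint V₂ V₃) :
    Set.InjOn (fun t : Fin n × Fin n × Fin n => ({t.1, t.2.1, t.2.2} : Finset (Fin n)))
      (V₁ ×ˢ V₂ ×ˢ V₃ : Finset (Fin n × Fin n × Fin n)) := by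
  rintro ⟨x, y, z⟩ hm ⟨x', y', z'⟩ hm' heq
  simp only [Finset.coe_product, Set.mem_prod, Finset.mem_coe] at hm hm'
  obtain ⟨hx, hy, hz⟩ := hm
  obtain ⟨hx', hy', hz'⟩ := hm'
  simp only at heq
  have d12 := Finset.disjoint_left.mp h12
  have d13 := Finset.disjoint_left.mp h13
  have d23 := Finset.disjoint_left.mp h23
  have hxx : x = x' := by
    have : x' ∈ ({x, y, z} : Finset (Fin n)) := by
      rw [heq]; exact Finset.mem_insert_self _ _
    simp only [Finset.mem_insert, Finset.mem_singleton] at this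
    rcases this with h | h | h
    · exact h.symm
    · exfalso; rw [h] at hx'; exact d12 hx' hy
    · exfalso; rw [h] at hx'; exact d13 hx' hz
  have hyy : y = y' := by
    have : y' ∈ ({x, y, z} : Finset (Fin n)) := by
      rw [heq]; exact Finset.mem_insert_of_mem (Finset.mem_insert_self _ _)
    simp only [Finset.mem_insert, Finset.mem_singleton] at this
    rcases this with h | h | h
    · exfalso; rw [h] at hy'; exact d12 hx hy'
    · exact h.symm
    · exfalso; rw [h] at hy'; exact d23 hy' hz
  have hzz : z = z' := by
    have : z' ∈ ({x, y, z} : Finset (Fin n)) := by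
      rw [heq]; exact Finset.mem_insert_of_mem (Finset.mem_insert_of_mem
        (Finset.mem_singleton_self _))
    simp only [Finset.mem_insert, Finset.mem_singleton] at this
    rcases this with h | h | h
    · exfalso; rw [h] at hz'; exact d13 hx hz'
    · exfalso; rw [h] at hz'; exact d23 hy hz'
    · exact h.symm
  simp [hxx, hyy, hzz]

lemma bad_bound {n : ℕ} {p b : ℝ} (hp0 : 0 ≤ p) (hp1 : p ≤ 1) (hb : 1 < b)
    (V₁ V₂ V₃ : Finset (Fin n))
    (h12 : Disjoint V₁ V₂) (h13 : Disjoint V₁ V₃) (h23 : Disjoint V₂ V₃) :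
    probH3 n p (fun G =>
        b * p * ((V₁.card : ℝ) * V₂.card * V₃.card) < (tripleCount G V₁ V₂ V₃ : ℝ))
      ≤ Real.exp (-((b * Real.log b - b + 1) * p *
          ((V₁.card : ℝ) * V₂.card * V₃.card))) := by
  classical
  set f : Fin n × Fin n × Fin n → Finset (Fin n) :=
    fun t => ({t.1, t.2.1, t.2.2} : Finset (Fin n)) with hf
  set T : Finset (Finset (Fin n)) := (V₁ ×ˢ V₂ ×ˢ V₃).image f with hTdef
  have hinj := triple_injOn h12 h13 h23
  have d12 := Finset.disjoint_left.mp h12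
  have d13 := Finset.disjoint_left.mp h13
  have d23 := Finset.disjoint_left.mp h23
  have hTsub : T ⊆ triples n := by
    intro e he
    rw [hTdef, Finset.mem_image] at he
    obtain ⟨⟨x, y, z⟩, hm, rfl⟩ := he
    simp only [Finset.mem_product] at hm
    obtain ⟨hx, hy, hz⟩ := hm
    have hxy : x ≠ y := fun h => d12 hx (h ▸ hy)
    have hxz : x ≠ z := fun h => d13 hx (h ▸ hz)
    have hyz : y ≠ z := fun h => d23 hy (h ▸ hz)
    simp only [triples, Finset.mem_powersetCard_univ]
    exact Finset.card_eq_three.mpr ⟨x, y, z, hxy, hxz, hyz, rfl⟩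
  have hTcard : (T.card : ℝ) = (V₁.card : ℝ) * V₂.card * V₃.card := by
    rw [hTdef, Finset.card_image_of_injOn hinj, Finset.card_product, Finset.card_product]
    push_cast; ring
  have hcount : ∀ G : Finset (Finset (Fin n)),
      tripleCount G V₁ V₂ V₃ = (G ∩ T).card := by
    intro G
    have h1 : ((V₁ ×ˢ V₂ ×ˢ V₃).filter fun t => f t ∈ G).image f = T.filter (· ∈ G) := by
      rw [hTdef, Finset.filter_image]
    have h2 : (((V₁ ×ˢ V₂ ×ˢ V₃).filter fun t => f t ∈ G).image f).card
        = ((V₁ ×ˢ V₂ ×ˢ V₃).filter fun t => f t ∈ G).card :=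
      Finset.card_image_of_injOn (hinj.mono (by
        intro t ht
        simp only [Finset.coe_filter, Set.mem_setOf_eq] at ht
        exact ht.1))
    unfold tripleCount
    rw [← h2, h1, Finset.filter_mem_eq_inter, Finset.inter_comm]
  set M : ℝ := (V₁.card : ℝ) * V₂.card * V₃.card with hM
  have hM0 : 0 ≤ M := by positivity
  have hb0 : (0 : ℝ) < b := by linarith
  have hr : 0 ≤ b * p * M := by positivity
  have step := probH3_chernoff hp0 hp1 T hTsub hb hr
  have mono : probH3 n p (fun G => b * p * M < (tripleCount G V₁ V₂ V₃ : ℝ))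
      ≤ probH3 n p (fun G => b * p * M < ((G ∩ T).card : ℝ)) :=
    probH3_mono hp0 hp1 fun G hG => by rwa [← hcount G]
  refine le_trans (le_trans mono step) (le_of_eq ?_)
  rw [hTcard]
  congr 1
  ring
end Aux2

open Classical in
lemma probH3_of_false {n : ℕ} {p : ℝ} (P : Finset (Finset (Fin n)) → Prop)
    (h : ∀ G, ¬ P G) : probH3 n p P = 0 :=
  Finset.sum_eq_zero fun G _ => if_neg (h G)


/-- Lemma 3.2: `H³(n,p)` is `(η,b,p)`-upper-uniform with
probability at least `1 − e^{−ω(n log n)}`, provided `p = ω(n⁻² log n)`. -/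
theorem stmt_10 :
    ∀ η b : ℝ, 0 < η → η < 1 → 1 < b →
    ∀ p : ℕ → ℝ, (∀ n, 0 ≤ p n ∧ p n ≤ 1) →
    Filter.Tendsto (fun n : ℕ => p n * (n : ℝ) ^ 2 / Real.log n)
      Filter.atTop Filter.atTop →
    ∀ K : ℝ, 0 < K →
      ∀ᶠ n : ℕ in Filter.atTop,
        probH3 n (p n) (fun G => ¬ UpperUniform G η b (p n)) ≤
          Real.exp (-(K * n * Real.log n)) := by
  intro η b hη hη1 hb p hp htend K hK
  classical
  have hb0 : (0:ℝ) < b := by linarith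
  have hlogb : 1 - b⁻¹ < Real.log b := by
    have h1 : Real.log b⁻¹ < b⁻¹ - 1 :=
      Real.log_lt_sub_one_of_pos (by positivity) (by
        intro h
        rw [inv_eq_one] at h
        linarith)
    rw [Real.log_inv] at h1
    linarith
  have hc0 : 0 < b * Real.log b - b + 1 := by
    have hbb : b * (1 - b⁻¹) = b - 1 := by field_simp
    nlinarith
  have hcη : 0 < (b * Real.log b - b + 1) * η^3 := by positivity
  set L : ℝ := (K + 3) / ((b * Real.log b - b + 1) * η^3) with hL
  filter_upwards [htend.eventually_ge_atTop L, Filter.eventually_ge_atTop 3] with n hLn hn3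
  obtain ⟨hp0, hp1⟩ := hp n
  set S := ((Finset.univ : Finset (Fin n)).powerset ×ˢ
    (Finset.univ : Finset (Fin n)).powerset ×ˢ
    (Finset.univ : Finset (Fin n)).powerset) with hS
  set Q := fun (v : Finset (Fin n) × Finset (Fin n) × Finset (Fin n))
      (G : Finset (Finset (Fin n))) =>
    Disjoint v.1 v.2.1 ∧ Disjoint v.1 v.2.2 ∧ Disjoint v.2.1 v.2.2 ∧
    η * n ≤ (v.1.card : ℝ) ∧ η * n ≤ (v.2.1.card : ℝ) ∧ η * n ≤ (v.2.2.card : ℝ) ∧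
    b * p n * ((v.1.card : ℝ) * v.2.1.card * v.2.2.card)
      < (tripleCount G v.1 v.2.1 v.2.2 : ℝ) with hQ
  have hUnion : ∀ G, ¬ UpperUniform G η b (p n) → ∃ v ∈ S, Q v G := by
    intro G hG
    rw [UpperUniform] at hG
    push_neg at hG
    obtain ⟨V₁, V₂, V₃, h12, h13, h23, hs1, hs2, hs3, hlt⟩ := hG
    exact ⟨(V₁, V₂, V₃), by simp [hS], h12, h13, h23, hs1, hs2, hs3, hlt⟩
  have hn0 : (0:ℝ) ≤ n := Nat.cast_nonneg n
  set E : ℝ := Real.exp (-((b * Real.log b - b + 1) * p n * (η * n)^3)) with hE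
  have hv : ∀ v ∈ S, probH3 n (p n) (Q v) ≤ E := by
    intro v _
    by_cases hcond : Disjoint v.1 v.2.1 ∧ Disjoint v.1 v.2.2 ∧ Disjoint v.2.1 v.2.2 ∧
        η * n ≤ (v.1.card : ℝ) ∧ η * n ≤ (v.2.1.card : ℝ) ∧ η * n ≤ (v.2.2.card : ℝ)
    · obtain ⟨h12, h13, h23, hs1, hs2, hs3⟩ := hcond
      have hbd := bad_bound hp0 hp1 hb v.1 v.2.1 v.2.2 h12 h13 h23
      have hmono : probH3 n (p n) (Q v) ≤ probH3 n (p n) (fun G =>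
          b * p n * ((v.1.card : ℝ) * v.2.1.card * v.2.2.card)
            < (tripleCount G v.1 v.2.1 v.2.2 : ℝ)) :=
        probH3_mono hp0 hp1 fun G hG => hG.2.2.2.2.2.2
      refine le_trans (le_trans hmono hbd) (Real.exp_le_exp.mpr ?_)
      have hηn : (0:ℝ) ≤ η * n := by positivity
      have hM : (η * n)^3 ≤ (v.1.card : ℝ) * v.2.1.card * v.2.2.card := by
        calc (η * n)^3 = (η * n) * (η * n) * (η * n) := by ring
          _ ≤ (v.1.card : ℝ) * v.2.1.card * v.2.2.card := by
            apply mul_le_mul (mul_le_mul hs1 hs2 hηn (le_trans hηn hs1)) hs3 hηn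
            positivity
      have hcp : 0 ≤ (b * Real.log b - b + 1) * p n := mul_nonneg hc0.le hp0
      exact neg_le_neg (mul_le_mul_of_nonneg_left hM hcp)
    · have hzero : probH3 n (p n) (Q v) = 0 :=
        probH3_of_false _ fun G hQv =>
          hcond ⟨hQv.1, hQv.2.1, hQv.2.2.1, hQv.2.2.2.1, hQv.2.2.2.2.1, hQv.2.2.2.2.2.1⟩
      rw [hzero]
      exact (Real.exp_pos _).le
  have h1 := probH3_union hp0 hp1 S Q hUnion
  have h2 : ∑ v ∈ S, probH3 n (p n) (Q v) ≤ (S.card : ℝ) * E := by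
    calc ∑ v ∈ S, probH3 n (p n) (Q v) ≤ ∑ _v ∈ S, E := Finset.sum_le_sum hv
      _ = (S.card : ℝ) * E := by rw [Finset.sum_const, nsmul_eq_mul]
  have hScard : S.card = 2 ^ (n * 3) := by
    simp [hS, Finset.card_powerset]
    ring
  have hn3' : (3:ℝ) ≤ (n:ℝ) := by exact_mod_cast hn3
  have hlog2n : Real.log 2 ≤ Real.log n := Real.log_le_log (by norm_num) (by linarith)
  have hlogn0 : 0 < Real.log n := Real.log_pos (by linarith)
  have hA : (K + 3) * ((n:ℝ) * Real.log n)
      ≤ (b * Real.log b - b + 1) * p n * (η * n)^3 := by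
    have heq : (b * Real.log b - b + 1) * p n * (η * n)^3
        = ((b * Real.log b - b + 1) * η^3) * (p n * (n:ℝ)^2 / Real.log n)
            * ((n:ℝ) * Real.log n) := by
      field_simp
    rw [heq]
    have hq1 : ((b * Real.log b - b + 1) * η^3) * L
        ≤ ((b * Real.log b - b + 1) * η^3) * (p n * (n:ℝ)^2 / Real.log n) :=
      mul_le_mul_of_nonneg_left hLn hcη.le
    have hq2 : ((b * Real.log b - b + 1) * η^3) * L = K + 3 := by
      rw [hL]
      field_simp
      exact div_self (ne_of_gt (by nlinarith [hc0]))
    have hnl : 0 ≤ (n:ℝ) * Real.log n := mul_nonneg hn0 hlogn0.le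
    calc (K + 3) * ((n:ℝ) * Real.log n)
        = (((b * Real.log b - b + 1) * η^3) * L) * ((n:ℝ) * Real.log n) := by rw [hq2]
      _ ≤ (((b * Real.log b - b + 1) * η^3) * (p n * (n:ℝ)^2 / Real.log n))
            * ((n:ℝ) * Real.log n) := mul_le_mul_of_nonneg_right hq1 hnl
  calc probH3 n (p n) (fun G => ¬ UpperUniform G η b (p n))
      ≤ (S.card : ℝ) * E := le_trans h1 h2
    _ = Real.exp (((n * 3 : ℕ) : ℝ) * Real.log 2) * E := by
        rw [hScard, Real.exp_nat_mul, Real.exp_log (by norm_num : (0:ℝ) < 2)]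
        push_cast
        ring
    _ = Real.exp (((n * 3 : ℕ) : ℝ) * Real.log 2
          - (b * Real.log b - b + 1) * p n * (η * n)^3) := by
        rw [hE, ← Real.exp_add]
        congr 1
        try ring
    _ ≤ Real.exp (-(K * n * Real.log n)) := by
        apply Real.exp_le_exp.mpr
        push_cast
        have h3 : 3 * (n:ℝ) * Real.log 2 ≤ 3 * (n:ℝ) * Real.log n := by
          apply mul_le_mul_of_nonneg_left hlog2n
          linarith
        nlinarith [h3, hA]
end

section
/- There exists a constant L > 0 such that for any sufficiently large m, there exists a graph T with 2m ≤ v(T) ≤ L·m vertices, maximum degree at most L, and a set Z of m vertices of T, such that for every Z' ⊆ Z with |Z'| < m/2 and |V(T)∖Z'| even, the graph T − Z' has a perfect matching. -/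
open Finset

variable {α : Type*} [DecidableEq α]

namespace Stmt15Aux

/-- number of kept blocks below `i` -/
def kap (K : Finset ℕ) (i : ℕ) : ℕ := (K.filter (· < i)).card

/-- parity of `kap` -/
def eps (K : Finset ℕ) (i : ℕ) : ℕ := kap K i % 2

lemma eps_lt_two (K : Finset ℕ) (i : ℕ) : eps K i < 2 := Nat.mod_lt _ (by norm_num)

/-- position j on the path is not matched to a z-vertex -/
def inR (K : Finset ℕ) (j : ℕ) : Prop := j / 2 ∈ K → ¬ (j % 2 = eps K (j / 2))

instance (K : Finset ℕ) : DecidablePred (inR K) := fun _ => by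
  unfold inR; infer_instance

/-- count of `inR` positions below `j` -/
def cc (K : Finset ℕ) (j : ℕ) : ℕ := ((Finset.range j).filter (inR K)).card

lemma kap_succ (K : Finset ℕ) (i : ℕ) :
    kap K (i + 1) = kap K i + if i ∈ K then 1 else 0 := by
  unfold kap
  have h : K.filter (· < i + 1) = (K.filter (· < i)) ∪ K.filter (· = i) := by
    ext x; simp only [Finset.mem_filter, Finset.mem_union]
    constructor
    · rintro ⟨hx, hlt⟩
      rcases Nat.lt_succ_iff_lt_or_eq.mp hlt with h | h
      · exact Or.inl ⟨hx, h⟩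
      · exact Or.inr ⟨hx, h⟩
    · rintro (⟨hx, h⟩ | ⟨hx, h⟩) <;> exact ⟨hx, by omega⟩
  rw [h, Finset.card_union_of_disjoint, Finset.filter_eq']
  · split_ifs with h
    · simp
    · simp
  · rw [Finset.disjoint_left]
    intro a ha ha'
    simp only [Finset.mem_filter] at ha ha'
    omega

lemma cc_succ (K : Finset ℕ) (j : ℕ) :
    cc K (j + 1) = cc K j + if inR K j then 1 else 0 := by
  unfold cc
  rw [Finset.range_add_one, Finset.filter_insert]
  split_ifs with h
  · rw [Finset.card_insert_of_notMem (by simp)]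
  · rfl

lemma inR_even (K : Finset ℕ) (i : ℕ) : inR K (2 * i) ↔ (i ∈ K → ¬ (0 = eps K i)) := by
  unfold inR
  have h1 : 2 * i / 2 = i := by omega
  have h2 : 2 * i % 2 = 0 := by omega
  rw [h1, h2]

lemma inR_odd (K : Finset ℕ) (i : ℕ) : inR K (2 * i + 1) ↔ (i ∈ K → ¬ (1 = eps K i)) := by
  unfold inR
  have h1 : (2 * i + 1) / 2 = i := by omega
  have h2 : (2 * i + 1) % 2 = 1 := by omega
  rw [h1, h2]

lemma cc_block (K : Finset ℕ) : ∀ i, cc K (2 * i) + kap K i = 2 * i := by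
  intro i
  induction i with
  | zero => simp [cc, kap]
  | succ i ih =>
    have e1 : 2 * (i + 1) = (2 * i + 1) + 1 := by ring
    rw [e1, cc_succ, cc_succ, kap_succ]
    by_cases hK : i ∈ K
    · rcases Nat.mod_two_eq_zero_or_one (kap K i) with h | h
      · have he : eps K i = 0 := h
        have h0 : ¬ inR K (2 * i) := by
          rw [inR_even]; push_neg; exact ⟨hK, he.symm⟩
        have h1 : inR K (2 * i + 1) := by
          rw [inR_odd]; intro _; omega
        rw [if_neg h0, if_pos h1, if_pos hK]; omega
      · have he : eps K i = 1 := h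
        have h0 : inR K (2 * i) := by
          rw [inR_even]; intro _; omega
        have h1 : ¬ inR K (2 * i + 1) := by
          rw [inR_odd]; push_neg; exact ⟨hK, he.symm⟩
        rw [if_pos h0, if_neg h1, if_pos hK]; omega
    · have h0 : inR K (2 * i) := by rw [inR_even]; intro h; exact absurd h hK
      have h1 : inR K (2 * i + 1) := by rw [inR_odd]; intro h; exact absurd h hK
      rw [if_pos h0, if_pos h1, if_neg hK]; omega

lemma kap_top (K : Finset ℕ) (m : ℕ) (hKm : ∀ i ∈ K, i < m) : kap K m = K.card := by
  unfold kap
  rw [Finset.filter_true_of_mem hKm]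

lemma cc_top_even (K : Finset ℕ) (m : ℕ) (hKm : ∀ i ∈ K, i < m) (hKe : K.card % 2 = 0) :
    cc K (2 * m) % 2 = 0 := by
  have h := cc_block K m
  rw [kap_top K m hKm] at h
  omega

/-- L1: an `inR` position with even count is followed by an `inR` position. -/
lemma step_even (K : Finset ℕ) (m : ℕ) (hKm : ∀ i ∈ K, i < m) (hKe : K.card % 2 = 0)
    (j : ℕ) (hj : j < 2 * m) (h1 : inR K j) (h2 : cc K j % 2 = 0) :
    j + 1 < 2 * m ∧ inR K (j + 1) := by
  have hb : j = 2 * (j / 2) + j % 2 := by omega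
  set i := j / 2 with hi
  have him : i < m := by omega
  have hblock := cc_block K i
  rcases Nat.mod_two_eq_zero_or_one j with hb0 | hb1
  · -- j = 2*i
    have hje : j = 2 * i := by omega
    have hcc : cc K (2 * i) % 2 = 0 := by rw [← hje]; exact h2
    have hke : kap K i % 2 = 0 := by omega
    constructor
    · omega
    · have : j + 1 = 2 * i + 1 := by omega
      rw [this, inR_odd]
      intro _
      unfold eps; omega
  · -- j = 2*i+1
    have hje : j = 2 * i + 1 := by omega
    have hcs : cc K (2 * i + 1) = cc K (2 * i) + if inR K (2 * i) then 1 else 0 :=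
      cc_succ K (2 * i)
    have hkodd : kap K (i + 1) % 2 = 1 := by
      rw [kap_succ]
      by_cases hK : i ∈ K
      · rw [if_pos hK]
        have he0 : eps K i = 0 := by
          rw [hje, inR_odd] at h1
          have := h1 hK
          have := eps_lt_two K i
          omega
        have h0 : ¬ inR K (2 * i) := by
          rw [inR_even]; push_neg; exact ⟨hK, he0.symm⟩
        rw [if_neg h0] at hcs
        unfold eps at he0
        omega
      · rw [if_neg hK]
        have h0 : inR K (2 * i) := by rw [inR_even]; intro h; exact absurd h hK
        rw [if_pos h0] at hcs
        rw [hje] at h2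
        omega
    have hne : i + 1 ≠ m := by
      intro hcontr
      have htop := cc_top_even K m hKm hKe
      have : cc K (2 * m) = cc K j + 1 := by
        have : 2 * m = j + 1 := by omega
        rw [this, cc_succ, if_pos h1]
      omega
    constructor
    · omega
    · have : j + 1 = 2 * (i + 1) := by omega
      rw [this, inR_even]
      intro _
      unfold eps; omega

/-- L2: an `inR` position with odd count is preceded by an `inR` position with even count. -/
lemma step_odd (K : Finset ℕ) (j : ℕ) (h1 : inR K j) (h2 : cc K j % 2 = 1) :
    ∃ j0, j = j0 + 1 ∧ inR K j0 ∧ cc K j0 % 2 = 0 := by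
  have hb : j = 2 * (j / 2) + j % 2 := by omega
  set i := j / 2 with hi
  have hblock := cc_block K i
  rcases Nat.mod_two_eq_zero_or_one j with hb0 | hb1
  · -- j = 2*i, count odd ⇒ kap i odd ⇒ i ≥ 1
    have hje : j = 2 * i := by omega
    have hko : kap K i % 2 = 1 := by
      rw [hje] at h2; omega
    have hipos : 0 < i := by
      rcases Nat.eq_zero_or_pos i with h | h
      · exfalso; rw [h] at hko; simp [kap] at hko
      · exact h
    obtain ⟨i', hii⟩ : ∃ i', i = i' + 1 := ⟨i - 1, by omega⟩
    rw [hii] at hje hko hblock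
    refine ⟨2 * i' + 1, by omega, ?_, ?_⟩
    · rw [inR_odd]
      intro hK
      have hkk := kap_succ K i'
      by_cases hK' : i' ∈ K
      · rw [if_pos hK'] at hkk
        unfold eps; omega
      · exact absurd hK hK'
    · have hcs : cc K (2 * i' + 1 + 1) = cc K (2 * i' + 1) + if inR K (2 * i' + 1) then 1 else 0 :=
        cc_succ K (2 * i' + 1)
    -- need inR (2i'+1) to determine the if; show it holds in both cases
      have hR : inR K (2 * i' + 1) := by
        rw [inR_odd]
        intro hK'
        have hkk := kap_succ K i'
        rw [if_pos hK'] at hkk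
        unfold eps; omega
      rw [if_pos hR] at hcs
      have : 2 * (i' + 1) = 2 * i' + 1 + 1 := by ring
      rw [hje, this] at h2
      omega
  · -- j = 2*i+1
    have hje : j = 2 * i + 1 := by omega
    have hcs : cc K (2 * i + 1) = cc K (2 * i) + if inR K (2 * i) then 1 else 0 :=
      cc_succ K (2 * i)
    by_cases hK : i ∈ K
    · -- then eps i = 0 (from h1), so inR(2i) false, cc(2i+1)=cc(2i) even: contradiction
      exfalso
      have he0 : eps K i = 0 := by
        rw [hje, inR_odd] at h1
        have := h1 hK
        have := eps_lt_two K i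
        omega
      have h0 : ¬ inR K (2 * i) := by
        rw [inR_even]; push_neg; exact ⟨hK, he0.symm⟩
      rw [if_neg h0] at hcs
      unfold eps at he0
      rw [hje] at h2
      omega
    · have h0 : inR K (2 * i) := by rw [inR_even]; intro h; exact absurd h hK
      rw [if_pos h0] at hcs
      refine ⟨2 * i, by omega, h0, ?_⟩
      rw [hje] at h2
      omega


/-- the vertex labelled `j` (indices taken mod `3k+3`) -/
def vv (k j : ℕ) : Fin (3*k+3) := ⟨j % (3*k+3), Nat.mod_lt _ (by omega)⟩

lemma vv_val (k j : ℕ) (h : j < 3*k+3) : (vv k j).val = j := Nat.mod_eq_of_lt h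

lemma vv_inj (k a b : ℕ) (ha : a < 3*k+3) (hb : b < 3*k+3) (h : vv k a = vv k b) : a = b := by
  have h2 : (vv k a).val = (vv k b).val := congrArg Fin.val h
  rw [vv_val k a ha, vv_val k b hb] at h2
  exact h2

lemma pair_card (k a b : ℕ) (ha : a < 3*k+3) (hb : b < 3*k+3) (hab : a ≠ b) :
    ({vv k a, vv k b} : Finset (Fin (3*k+3))).card = 2 := by
  rw [Finset.card_insert_of_notMem, Finset.card_singleton]
  simp only [Finset.mem_singleton]
  exact fun h => hab (vv_inj k a b ha hb h)

lemma vv_disj_pair (k a b c d : ℕ) (ha : a < 3*k+3) (hb : b < 3*k+3)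
    (hc : c < 3*k+3) (hd : d < 3*k+3)
    (h1 : a ≠ c) (h2 : a ≠ d) (h3 : b ≠ c) (h4 : b ≠ d) :
    Disjoint ({vv k a, vv k b} : Finset (Fin (3*k+3))) {vv k c, vv k d} := by
  rw [Finset.disjoint_left]
  intro x hx hx'
  simp only [Finset.mem_insert, Finset.mem_singleton] at hx hx'
  rcases hx with rfl | rfl <;> rcases hx' with h | h
  · exact h1 (vv_inj k a c ha hc h)
  · exact h2 (vv_inj k a d ha hd h)
  · exact h3 (vv_inj k b c hb hc h)
  · exact h4 (vv_inj k b d hb hd h)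

/-- path edges -/
def E1 (k : ℕ) : Finset (Finset (Fin (3*k+3))) :=
  (Finset.range (2*k+1)).image (fun j => {vv k j, vv k (j+1)})

/-- z-to-left edges -/
def E2 (k : ℕ) : Finset (Finset (Fin (3*k+3))) :=
  (Finset.range (k+1)).image (fun i => {vv k (2*k+2+i), vv k (2*i)})

/-- z-to-right edges -/
def E3 (k : ℕ) : Finset (Finset (Fin (3*k+3))) :=
  (Finset.range (k+1)).image (fun i => {vv k (2*k+2+i), vv k (2*i+1)})

/-- the template graph -/
def TT (k : ℕ) : Finset (Finset (Fin (3*k+3))) := E1 k ∪ E2 k ∪ E3 k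

/-- the flexible set -/
def ZZ (k : ℕ) : Finset (Fin (3*k+3)) :=
  (Finset.range (k+1)).image (fun i => vv k (2*k+2+i))

lemma TT_card2 (k : ℕ) : ∀ e ∈ TT k, e.card = 2 := by
  intro e he
  simp only [TT, E1, E2, E3, Finset.mem_union, Finset.mem_image, Finset.mem_range] at he
  rcases he with (⟨j, hj, rfl⟩ | ⟨i, hi, rfl⟩) | ⟨i, hi, rfl⟩
  · exact pair_card k _ _ (by omega) (by omega) (by omega)
  · exact pair_card k _ _ (by omega) (by omega) (by omega)
  · exact pair_card k _ _ (by omega) (by omega) (by omega)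

lemma TT_deg (k : ℕ) (w : Fin (3*k+3)) : ((TT k).filter fun e => w ∈ e).card ≤ 7 := by
  classical
  have hw := w.isLt
  have h1 : ((E1 k).filter fun e => w ∈ e).card ≤ 2 := by
    have hsub : ((E1 k).filter fun e => w ∈ e) ⊆
        (({w.val, w.val - 1} : Finset ℕ)).image (fun j => {vv k j, vv k (j+1)}) := by
      intro e he
      simp only [E1, Finset.mem_filter, Finset.mem_image, Finset.mem_range] at he
      obtain ⟨⟨j, hj, rfl⟩, hwmem⟩ := he
      simp only [Finset.mem_insert, Finset.mem_singleton] at hwmem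
      simp only [Finset.mem_image, Finset.mem_insert, Finset.mem_singleton]
      rcases hwmem with h | h
      · have : w.val = j := by rw [h, vv_val k j (by omega)]
        exact ⟨j, Or.inl this.symm, rfl⟩
      · have : w.val = j + 1 := by rw [h, vv_val k (j+1) (by omega)]
        exact ⟨j, Or.inr (by omega), rfl⟩
    calc ((E1 k).filter fun e => w ∈ e).card
        ≤ _ := Finset.card_le_card hsub
      _ ≤ ({w.val, w.val - 1} : Finset ℕ).card := Finset.card_image_le
      _ ≤ 2 := le_trans (Finset.card_insert_le _ _) (by simp)
  have h2 : ((E2 k).filter fun e => w ∈ e).card ≤ 2 := by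
    have hsub : ((E2 k).filter fun e => w ∈ e) ⊆
        (({w.val - (2*k+2), w.val / 2} : Finset ℕ)).image
          (fun i => {vv k (2*k+2+i), vv k (2*i)}) := by
      intro e he
      simp only [E2, Finset.mem_filter, Finset.mem_image, Finset.mem_range] at he
      obtain ⟨⟨i, hi, rfl⟩, hwmem⟩ := he
      simp only [Finset.mem_insert, Finset.mem_singleton] at hwmem
      simp only [Finset.mem_image, Finset.mem_insert, Finset.mem_singleton]
      rcases hwmem with h | h
      · have : w.val = 2*k+2+i := by rw [h, vv_val k _ (by omega)]
        exact ⟨i, Or.inl (by omega), rfl⟩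
      · have : w.val = 2*i := by rw [h, vv_val k _ (by omega)]
        exact ⟨i, Or.inr (by omega), rfl⟩
    calc ((E2 k).filter fun e => w ∈ e).card
        ≤ _ := Finset.card_le_card hsub
      _ ≤ _ := Finset.card_image_le
      _ ≤ 2 := le_trans (Finset.card_insert_le _ _) (by simp)
  have h3 : ((E3 k).filter fun e => w ∈ e).card ≤ 2 := by
    have hsub : ((E3 k).filter fun e => w ∈ e) ⊆
        (({w.val - (2*k+2), w.val / 2} : Finset ℕ)).image
          (fun i => {vv k (2*k+2+i), vv k (2*i+1)}) := by
      intro e he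
      simp only [E3, Finset.mem_filter, Finset.mem_image, Finset.mem_range] at he
      obtain ⟨⟨i, hi, rfl⟩, hwmem⟩ := he
      simp only [Finset.mem_insert, Finset.mem_singleton] at hwmem
      simp only [Finset.mem_image, Finset.mem_insert, Finset.mem_singleton]
      rcases hwmem with h | h
      · have : w.val = 2*k+2+i := by rw [h, vv_val k _ (by omega)]
        exact ⟨i, Or.inl (by omega), rfl⟩
      · have : w.val = 2*i+1 := by rw [h, vv_val k _ (by omega)]
        exact ⟨i, Or.inr (by omega), rfl⟩
    calc ((E3 k).filter fun e => w ∈ e).card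
        ≤ _ := Finset.card_le_card hsub
      _ ≤ _ := Finset.card_image_le
      _ ≤ 2 := le_trans (Finset.card_insert_le _ _) (by simp)
  have : ((TT k).filter fun e => w ∈ e).card ≤
      ((E1 k).filter fun e => w ∈ e).card + ((E2 k).filter fun e => w ∈ e).card
        + ((E3 k).filter fun e => w ∈ e).card := by
    rw [TT, Finset.filter_union, Finset.filter_union]
    exact le_trans (Finset.card_union_le _ _)
      (by have := Finset.card_union_le ((E1 k).filter fun e => w ∈ e)
            ((E2 k).filter fun e => w ∈ e); omega)
  omega

lemma ZZ_card (k : ℕ) : (ZZ k).card = k + 1 := by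
  rw [ZZ, Finset.card_image_of_injOn, Finset.card_range]
  intro a ha b hb h
  simp only [Finset.coe_range, Set.mem_Iio] at ha hb
  have := vv_inj k _ _ (by omega) (by omega) h
  omega

end Stmt15Aux

namespace Stmt15Aux

lemma not_inR_taken (K : Finset ℕ) (i : ℕ) (hi : i ∈ K) : ¬ inR K (2*i + eps K i) := by
  intro h
  have he := eps_lt_two K i
  have h1 : (2*i + eps K i) / 2 = i := by omega
  have h2 : (2*i + eps K i) % 2 = eps K i := by omega
  unfold inR at h
  rw [h1, h2] at h
  exact h hi rfl

lemma stmt15_matching (k : ℕ) (Z' : Finset (Fin (3*k+3))) (hsub : Z' ⊆ ZZ k)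
    (heven : Even (3*k+3 - Z'.card)) :
    ∃ M ⊆ TT k, (∀ e ∈ M, Disjoint e Z') ∧
      (∀ e ∈ M, ∀ f ∈ M, e ≠ f → Disjoint e f) ∧
      M.biUnion id = Finset.univ \ Z' := by
  classical
  set K : Finset ℕ := (Finset.range (k+1)).filter (fun i => ¬ (vv k (2*k+2+i) ∈ Z'))
    with hKdef
  have hmemK : ∀ i, i ∈ K ↔ (i < k+1 ∧ vv k (2*k+2+i) ∉ Z') := by
    intro i
    rw [hKdef, Finset.mem_filter, Finset.mem_range]
  have hKm : ∀ i ∈ K, i < k+1 := fun i hi => ((hmemK i).mp hi).1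
  -- every element of Z' is a z-vertex whose index is not in K
  have hZ'mem : ∀ x ∈ Z', ∃ i, i < k+1 ∧ i ∉ K ∧ x = vv k (2*k+2+i) := by
    intro x hx
    have hxZ := hsub hx
    simp only [ZZ, Finset.mem_image, Finset.mem_range] at hxZ
    obtain ⟨i, hi, hxi⟩ := hxZ
    exact ⟨i, hi, fun hiK => ((hmemK i).mp hiK).2 (hxi ▸ hx), hxi.symm⟩
  -- cardinality bookkeeping
  have himg : Z' = ((Finset.range (k+1)).filter (fun i => vv k (2*k+2+i) ∈ Z')).image
      (fun i => vv k (2*k+2+i)) := by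
    ext x
    simp only [Finset.mem_image, Finset.mem_filter, Finset.mem_range]
    constructor
    · intro hx
      obtain ⟨i, hi, hiK, rfl⟩ := hZ'mem x hx
      exact ⟨i, ⟨hi, hx⟩, rfl⟩
    · rintro ⟨i, ⟨hi, hmem⟩, rfl⟩
      exact hmem
  have hZcard : Z'.card + K.card = k + 1 := by
    have h1 : Z'.card = ((Finset.range (k+1)).filter
        (fun i => vv k (2*k+2+i) ∈ Z')).card := by
      conv_lhs => rw [himg]
      apply Finset.card_image_of_injOn
      intro a ha b hb h
      simp only [Finset.coe_filter, Set.mem_setOf_eq, Finset.mem_range] at ha hb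
      have := vv_inj k _ _ (by omega) (by omega) h
      omega
    have h2 : K = Finset.range (k+1) \
        ((Finset.range (k+1)).filter (fun i => vv k (2*k+2+i) ∈ Z')) := by
      rw [hKdef, Finset.filter_not]
    have h3 : K.card = (k+1) - ((Finset.range (k+1)).filter
        (fun i => vv k (2*k+2+i) ∈ Z')).card := by
      rw [h2, Finset.card_sdiff_of_subset (Finset.filter_subset _ _), Finset.card_range]
    have h4 := Finset.card_filter_le (Finset.range (k+1))
      (fun i => vv k (2*k+2+i) ∈ Z')
    rw [Finset.card_range] at h4
    omega
  have hKe : K.card % 2 = 0 := by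
    rw [Nat.even_iff] at heven
    omega
  -- the matching
  set A : Finset (Finset (Fin (3*k+3))) :=
    K.image (fun i => {vv k (2*k+2+i), vv k (2*i + eps K i)}) with hAdef
  set B : Finset (Finset (Fin (3*k+3))) :=
    ((Finset.range (2*k+2)).filter (fun j => inR K j ∧ cc K j % 2 = 0)).image
      (fun j => {vv k j, vv k (j+1)}) with hBdef
  have hstep : ∀ j, j < 2*k+2 → inR K j → cc K j % 2 = 0 →
      j + 1 < 2*k+2 ∧ inR K (j+1) := by
    intro j hj hR hc
    have := step_even K (k+1) hKm hKe j (by omega) hR hc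
    exact ⟨by omega, this.2⟩
  -- edges are disjoint from Z'
  have hdisjZ : ∀ e ∈ A ∪ B, Disjoint e Z' := by
    intro e he
    rw [Finset.disjoint_left]
    intro x hxe hxZ
    obtain ⟨i', hi', hni', rfl⟩ := hZ'mem x hxZ
    rcases Finset.mem_union.mp he with hA' | hB'
    · rw [hAdef, Finset.mem_image] at hA'
      obtain ⟨i, hiK, rfl⟩ := hA'
      have hik := hKm i hiK
      have hei := eps_lt_two K i
      simp only [Finset.mem_insert, Finset.mem_singleton] at hxe
      rcases hxe with h | h
      · have := vv_inj k _ _ (by omega) (by omega) h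
        have : i' = i := by omega
        exact hni' (this ▸ hiK)
      · have := vv_inj k _ _ (by omega) (by omega) h
        omega
    · rw [hBdef, Finset.mem_image] at hB'
      obtain ⟨j, hjf, rfl⟩ := hB'
      rw [Finset.mem_filter, Finset.mem_range] at hjf
      obtain ⟨hj, hR, hc⟩ := hjf
      have hj1 := (hstep j hj hR hc).1
      simp only [Finset.mem_insert, Finset.mem_singleton] at hxe
      rcases hxe with h | h
      · have := vv_inj k _ _ (by omega) (by omega) h
        omega
      · have := vv_inj k _ _ (by omega) (by omega) h
        omega
  -- pairwise disjointness
  have hAB : ∀ e ∈ A, ∀ f ∈ B, Disjoint e f := by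
    intro e he f hf
    rw [hAdef, Finset.mem_image] at he
    obtain ⟨i, hiK, rfl⟩ := he
    rw [hBdef, Finset.mem_image] at hf
    obtain ⟨j, hjf, rfl⟩ := hf
    rw [Finset.mem_filter, Finset.mem_range] at hjf
    obtain ⟨hj, hR, hc⟩ := hjf
    obtain ⟨hj1, hR1⟩ := hstep j hj hR hc
    have hik := hKm i hiK
    have hei := eps_lt_two K i
    have hnt := not_inR_taken K i hiK
    apply vv_disj_pair k _ _ _ _ (by omega) (by omega) (by omega) (by omega)
    · omega
    · omega
    · intro h
      exact hnt (h ▸ hR)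
    · intro h
      exact hnt (h ▸ hR1)
  have hpw : ∀ e ∈ A ∪ B, ∀ f ∈ A ∪ B, e ≠ f → Disjoint e f := by
    intro e he f hf hne
    rcases Finset.mem_union.mp he with heA | heB <;>
      rcases Finset.mem_union.mp hf with hfA | hfB
    · -- A A
      rw [hAdef, Finset.mem_image] at heA hfA
      obtain ⟨i, hiK, rfl⟩ := heA
      obtain ⟨i', hiK', rfl⟩ := hfA
      have hii : i ≠ i' := by
        intro h
        exact hne (by rw [h])
      have hik := hKm i hiK
      have hik' := hKm i' hiK'
      have hei := eps_lt_two K i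
      have hei' := eps_lt_two K i'
      apply vv_disj_pair k _ _ _ _ (by omega) (by omega) (by omega) (by omega) <;> omega
    · exact hAB _ heA _ hfB
    · exact (hAB _ hfA _ heB).symm
    · -- B B
      rw [hBdef, Finset.mem_image] at heB hfB
      obtain ⟨j, hjf, rfl⟩ := heB
      obtain ⟨j', hjf', rfl⟩ := hfB
      rw [Finset.mem_filter, Finset.mem_range] at hjf hjf'
      obtain ⟨hj, hR, hc⟩ := hjf
      obtain ⟨hj', hR', hc'⟩ := hjf'
      have hjj : j ≠ j' := by
        intro h
        exact hne (by rw [h])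
      obtain ⟨hj1, _⟩ := hstep j hj hR hc
      obtain ⟨hj1', _⟩ := hstep j' hj' hR' hc'
      have hne1 : j ≠ j' + 1 := by
        intro h
        have hcs := cc_succ K j'
        rw [if_pos hR'] at hcs
        rw [h] at hc
        omega
      have hne2 : j + 1 ≠ j' := by
        intro h
        have hcs := cc_succ K j
        rw [if_pos hR] at hcs
        rw [← h] at hc'
        omega
      apply vv_disj_pair k _ _ _ _ (by omega) (by omega) (by omega) (by omega) <;> omega
  refine ⟨A ∪ B, ?_, hdisjZ, hpw, ?_⟩
  · -- A ∪ B ⊆ TT k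
    intro e he
    rcases Finset.mem_union.mp he with hA' | hB'
    · rw [hAdef, Finset.mem_image] at hA'
      obtain ⟨i, hiK, rfl⟩ := hA'
      have hik := hKm i hiK
      have hei := eps_lt_two K i
      simp only [TT, E1, E2, E3, Finset.mem_union, Finset.mem_image, Finset.mem_range]
      rcases (show eps K i = 0 ∨ eps K i = 1 by omega) with he0 | he1
      · refine Or.inl (Or.inr ⟨i, hik, ?_⟩)
        rw [show 2*i + eps K i = 2*i by omega]
      · refine Or.inr ⟨i, hik, ?_⟩
        rw [show 2*i + eps K i = 2*i+1 by omega]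
    · rw [hBdef, Finset.mem_image] at hB'
      obtain ⟨j, hjf, rfl⟩ := hB'
      rw [Finset.mem_filter, Finset.mem_range] at hjf
      obtain ⟨hj, hR, hc⟩ := hjf
      have hj1 := (hstep j hj hR hc).1
      simp only [TT, E1, E2, E3, Finset.mem_union, Finset.mem_image, Finset.mem_range]
      exact Or.inl (Or.inl ⟨j, by omega, rfl⟩)
  · -- covering
    ext x
    simp only [Finset.mem_biUnion, id_eq, Finset.mem_sdiff, Finset.mem_univ, true_and]
    constructor
    · rintro ⟨e, he, hxe⟩ hxZ
      exact Finset.disjoint_left.mp (hdisjZ e he) hxe hxZ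
    · intro hxZ
      have hxlt := x.isLt
      have hxval : x = vv k x.val := by
        apply Fin.ext
        rw [vv_val k x.val hxlt]
      by_cases hhigh : 2*k+2 ≤ x.val
      · -- x is a kept z-vertex
        have hx2 : x = vv k (2*k+2 + (x.val - (2*k+2))) := by
          rw [hxval]
          congr 1
          omega
        have hiK : (x.val - (2*k+2)) ∈ K := by
          rw [hmemK]
          exact ⟨by omega, fun h => hxZ (hx2 ▸ h)⟩
        refine ⟨{vv k (2*k+2 + (x.val - (2*k+2))),
            vv k (2*(x.val - (2*k+2)) + eps K (x.val - (2*k+2)))}, ?_, ?_⟩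
        · exact Finset.mem_union_left _ (by
            rw [hAdef, Finset.mem_image]
            exact ⟨_, hiK, rfl⟩)
        · rw [Finset.mem_insert]
          exact Or.inl hx2
      · -- x is a path vertex
        push_neg at hhigh
        by_cases hR : inR K x.val
        · by_cases hc : cc K x.val % 2 = 0
          · refine ⟨{vv k x.val, vv k (x.val + 1)}, ?_, ?_⟩
            · refine Finset.mem_union_right _ ?_
              rw [hBdef, Finset.mem_image]
              exact ⟨x.val, Finset.mem_filter.mpr
                ⟨Finset.mem_range.mpr (by omega), hR, hc⟩, rfl⟩
            · rw [← hxval]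
              exact Finset.mem_insert_self _ _
          · have hc1 : cc K x.val % 2 = 1 := by omega
            obtain ⟨j0, hj0, hR0, hc0⟩ := step_odd K x.val hR hc1
            refine ⟨{vv k j0, vv k (j0 + 1)}, ?_, ?_⟩
            · refine Finset.mem_union_right _ ?_
              rw [hBdef, Finset.mem_image]
              exact ⟨j0, Finset.mem_filter.mpr
                ⟨Finset.mem_range.mpr (by omega), hR0, hc0⟩, rfl⟩
            · have : x = vv k (j0 + 1) := by
                rw [hxval, hj0]
              rw [this]
              exact Finset.mem_insert_of_mem (Finset.mem_singleton_self _)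
        · -- x is matched to its z-vertex
          unfold inR at hR
          push_neg at hR
          obtain ⟨hK2, hmod⟩ := hR
          have hj2 : x.val = 2*(x.val/2) + eps K (x.val/2) := by omega
          refine ⟨{vv k (2*k+2 + x.val/2), vv k (2*(x.val/2) + eps K (x.val/2))}, ?_, ?_⟩
          · exact Finset.mem_union_left _ (by
              rw [hAdef, Finset.mem_image]
              exact ⟨_, hK2, rfl⟩)
          · have hxe : x = vv k (2*(x.val/2) + eps K (x.val/2)) := by
              conv_lhs => rw [hxval]
              exact congrArg (vv k) hj2
            rw [Finset.mem_insert, Finset.mem_singleton]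
            exact Or.inr hxe

end Stmt15Aux


/-- Lemma 6.5, template graph: there is a constant `L` such that
for all large `m` there is a graph `T` on `N` vertices, `2m ≤ N ≤ Lm`, of maximum
degree at most `L`, with a set `Z` of `m` vertices such that removing any `Z' ⊆ Z`
with `|Z'| < m/2` and `N − |Z'|` even leaves a graph with a perfect matching. -/
theorem stmt_15 :
    ∃ L : ℕ, 0 < L ∧ ∃ m₀ : ℕ, ∀ m : ℕ, m₀ ≤ m →
      ∃ N : ℕ, 2 * m ≤ N ∧ N ≤ L * m ∧
      ∃ T : Finset (Finset (Fin N)),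
        (∀ e ∈ T, e.card = 2) ∧
        (∀ v : Fin N, (T.filter fun e => v ∈ e).card ≤ L) ∧
        ∃ Z : Finset (Fin N), Z.card = m ∧
          ∀ Z' ⊆ Z, 2 * Z'.card < m → Even (N - Z'.card) →
            ∃ M ⊆ T, (∀ e ∈ M, Disjoint e Z') ∧
              (∀ e ∈ M, ∀ f ∈ M, e ≠ f → Disjoint e f) ∧
              M.biUnion id = Finset.univ \ Z' := by
  refine ⟨7, by norm_num, 1, fun m hm => ⟨3*(m-1)+3, by omega, by omega, ?_⟩⟩
  refine ⟨Stmt15Aux.TT (m-1), Stmt15Aux.TT_card2 (m-1),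
    fun v => Stmt15Aux.TT_deg (m-1) v, Stmt15Aux.ZZ (m-1), ?_, ?_⟩
  · rw [Stmt15Aux.ZZ_card]
    omega
  · intro Z' hZs hZsmall hZeven
    exact Stmt15Aux.stmt15_matching (m-1) Z' hZs hZeven
end

section
/- The 3-density m_3 of the contracted backbone of an absorber equals 2/3; that is, max over subhypergraphs H' with v(H') ≥ 4 of (e(H') − 1)/(v(H') − 3) is 2/3. -/
set_option maxRecDepth 10000


open Finset

variable {α : Type*} [DecidableEq α]

/-- The contracted backbone of an absorber, as a 3-uniform hypergraph on 25 vertices: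
`x' = 0`, `x₇,…,x₁₀ = 1,…,4`, `a₁,…,a₄ = 5,…,8`, `y' = 9`, `y₇,…,y₁₀ = 10,…,13`,
`b₁,…,b₄ = 14,…,17`, `v₁,…,v₇ = 18,…,24`. -/
def contractedBackbone : Finset (Finset (Fin 25)) :=
  { -- x'x₇x₈, x₈x₉x₁₀, a₁a₂a₃, a₂a₄x', a₃a₄x₉
    {0, 1, 2}, {2, 3, 4}, {5, 6, 7}, {6, 8, 0}, {7, 8, 3},
    -- y'y₇y₈, y₈y₉y₁₀, b₁b₂b₃, b₂b₄y', b₃b₄y₉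
    {9, 10, 11}, {11, 12, 13}, {14, 15, 16}, {15, 17, 9}, {16, 17, 12},
    -- the copy of A²_{x₇y₇} on x₇ = 1, y₇ = 10, v₁,…,v₇ = 18,…,24:
    -- v₁v₂v₃, v₃v₄v₅, v₅v₆v₇, v₂x₇v₄, v₄y₇v₆
    {18, 19, 20}, {20, 21, 22}, {22, 23, 24}, {19, 1, 21}, {21, 10, 23} }


/-! ### Auxiliary material for `stmt_18` -/

/-- The `x`-side block of the contracted backbone. -/
def blkX : Finset (Finset (Fin 25)) := {{0, 1, 2}, {2, 3, 4}, {5, 6, 7}, {6, 8, 0}, {7, 8, 3}}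

/-- The `y`-side block. -/
def blkY : Finset (Finset (Fin 25)) :=
  {{9, 10, 11}, {11, 12, 13}, {14, 15, 16}, {15, 17, 9}, {16, 17, 12}}

/-- The middle (absorber) block. -/
def blkM : Finset (Finset (Fin 25)) :=
  {{18, 19, 20}, {20, 21, 22}, {22, 23, 24}, {19, 1, 21}, {21, 10, 23}}

lemma cb_eq : contractedBackbone = blkX ∪ blkY ∪ blkM := by decide

def edgX : Fin 5 → Finset (Fin 25) := ![{0, 1, 2}, {2, 3, 4}, {5, 6, 7}, {6, 8, 0}, {7, 8, 3}]

def edgY : Fin 5 → Finset (Fin 25) :=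
  ![{9, 10, 11}, {11, 12, 13}, {14, 15, 16}, {15, 17, 9}, {16, 17, 12}]

def edgM : Fin 5 → Finset (Fin 25) :=
  ![{18, 19, 20}, {20, 21, 22}, {22, 23, 24}, {19, 1, 21}, {21, 10, 23}]

lemma blkX_eq : blkX = Finset.univ.image edgX := by decide
lemma blkY_eq : blkY = Finset.univ.image edgY := by decide
lemma blkM_eq : blkM = Finset.univ.image edgM := by decide

lemma bound_edgX : ∀ S : Finset (Fin 5), S ≠ ∅ → 3 * S.card + 3 ≤ 2 * (S.sup edgX).card := by
  decide

lemma bound_edgY : ∀ S : Finset (Fin 5), S ≠ ∅ → 3 * S.card + 3 ≤ 2 * (S.sup edgY).card := by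
  decide

lemma bound_edgM : ∀ S : Finset (Fin 5), S ≠ ∅ → 3 * S.card + 3 ≤ 2 * (S.sup edgM).card := by
  decide

/-- Transfer a per-index bound to arbitrary subsets of the image. -/
lemma blk_bound (e : Fin 5 → Finset (Fin 25)) (he : Function.Injective e)
    (hb : ∀ S : Finset (Fin 5), S ≠ ∅ → 3 * S.card + 3 ≤ 2 * (S.sup e).card)
    (Z : Finset (Finset (Fin 25))) (hZ : Z ⊆ Finset.univ.image e) (hne : Z ≠ ∅) :
    3 * Z.card + 3 ≤ 2 * (Z.sup id).card := by
  classical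
  have hrepr : Z = (Finset.univ.filter (fun i => e i ∈ Z)).image e := by
    ext z
    simp only [Finset.mem_image, Finset.mem_filter, Finset.mem_univ, true_and]
    constructor
    · intro hz
      obtain ⟨i, -, rfl⟩ := Finset.mem_image.mp (hZ hz)
      exact ⟨i, hz, rfl⟩
    · rintro ⟨i, hi, rfl⟩
      exact hi
  set S := Finset.univ.filter (fun i => e i ∈ Z) with hS
  rw [hrepr, Finset.sup_image, Finset.card_image_of_injective _ he]
  have hSne : S ≠ ∅ := by
    intro h
    rw [hrepr, h, Finset.image_empty] at hne
    exact hne rfl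
  simpa [Function.comp] using hb S hSne

/-- The key combinatorial inequality, in natural numbers. -/
lemma key_nat (H' : Finset (Finset (Fin 25))) (hsub : H' ⊆ contractedBackbone)
    (hv : 4 ≤ (H'.sup id).card) : 3 * H'.card + 3 ≤ 2 * (H'.sup id).card := by
  classical
  set X := H' ∩ blkX with hXdef
  set Y := H' ∩ blkY with hYdef
  set M := H' ∩ blkM with hMdef
  have hXsub : X ⊆ blkX := Finset.inter_subset_right
  have hYsub : Y ⊆ blkY := Finset.inter_subset_right
  have hMsub : M ⊆ blkM := Finset.inter_subset_right
  have hsplit : H' = X ∪ Y ∪ M := by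
    have h1 : H' = H' ∩ contractedBackbone := (Finset.inter_eq_left.mpr hsub).symm
    rw [h1, cb_eq, Finset.inter_union_distrib_left, Finset.inter_union_distrib_left]
  -- edge counts
  have hdXY : Disjoint X Y := by
    have : Disjoint blkX blkY := Finset.disjoint_iff_inter_eq_empty.mpr (by decide)
    exact this.mono hXsub hYsub
  have hdXYM : Disjoint (X ∪ Y) M := by
    have : Disjoint (blkX ∪ blkY) blkM := Finset.disjoint_iff_inter_eq_empty.mpr (by decide)
    exact this.mono (Finset.union_subset_union hXsub hYsub) hMsub
  have ecard : H'.card = X.card + Y.card + M.card := by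
    rw [hsplit, Finset.card_union_of_disjoint hdXYM, Finset.card_union_of_disjoint hdXY]
  -- vertex sets
  set VX := X.sup id with hVX
  set VY := Y.sup id with hVY
  set VM := M.sup id with hVM
  have hsup : H'.sup id = VX ∪ VY ∪ VM := by
    rw [hsplit, Finset.sup_union, Finset.sup_union]
    rfl
  have hVXsub : VX ⊆ blkX.sup id := Finset.sup_mono hXsub
  have hVYsub : VY ⊆ blkY.sup id := Finset.sup_mono hYsub
  have hVMsub : VM ⊆ blkM.sup id := Finset.sup_mono hMsub
  have hdVXY : Disjoint VX VY := by
    have : Disjoint (blkX.sup id) (blkY.sup id) :=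
      Finset.disjoint_iff_inter_eq_empty.mpr (by decide)
    exact this.mono hVXsub hVYsub
  have hcardXY : (VX ∪ VY).card = VX.card + VY.card := Finset.card_union_of_disjoint hdVXY
  have hcardV : ((VX ∪ VY) ∪ VM).card + ((VX ∪ VY) ∩ VM).card
      = (VX ∪ VY).card + VM.card := Finset.card_union_add_card_inter _ _
  -- the intersection is contained in the two special vertices
  have hIsub : (VX ∪ VY) ∩ VM ⊆ (VX ∩ VM ∩ {1}) ∪ (VY ∩ VM ∩ {10}) := by
    intro z hz
    rw [Finset.mem_inter, Finset.mem_union] at hz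
    obtain ⟨hzXY, hzM⟩ := hz
    have key110 : ∀ w : Fin 25, w ∈ blkX.sup id ∪ blkY.sup id → w ∈ blkM.sup id →
        w = 1 ∨ w = 10 := by decide
    have hz110 : z = 1 ∨ z = 10 := by
      refine key110 z ?_ (hVMsub hzM)
      rcases hzXY with h | h
      · exact Finset.mem_union_left _ (hVXsub h)
      · exact Finset.mem_union_right _ (hVYsub h)
    rcases hz110 with rfl | rfl
    · have hzX : (1 : Fin 25) ∈ VX := by
        rcases hzXY with h | h
        · exact h
        · exact absurd (hVYsub h) (by decide)
      exact Finset.mem_union_left _ (by simp [Finset.mem_inter, hzX, hzM])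
    · have hzY : (10 : Fin 25) ∈ VY := by
        rcases hzXY with h | h
        · exact absurd (hVXsub h) (by decide)
        · exact h
      exact Finset.mem_union_right _ (by simp [Finset.mem_inter, hzY, hzM])
  have hI : ((VX ∪ VY) ∩ VM).card
      ≤ (VX ∩ VM ∩ {1}).card + (VY ∩ VM ∩ {10}).card :=
    (Finset.card_le_card hIsub).trans (Finset.card_union_le _ _)
  have ht1a : (VX ∩ VM ∩ ({1} : Finset (Fin 25))).card ≤ 1 :=
    (Finset.card_le_card Finset.inter_subset_right).trans_eq rfl
  have ht10a : (VY ∩ VM ∩ ({10} : Finset (Fin 25))).card ≤ 1 :=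
    (Finset.card_le_card Finset.inter_subset_right).trans_eq rfl
  have ht1b : (VX ∩ VM ∩ ({1} : Finset (Fin 25))).card ≤ VX.card :=
    Finset.card_le_card (Finset.inter_subset_left.trans Finset.inter_subset_left)
  have ht1c : (VX ∩ VM ∩ ({1} : Finset (Fin 25))).card ≤ VM.card :=
    Finset.card_le_card (Finset.inter_subset_left.trans Finset.inter_subset_right)
  have ht10b : (VY ∩ VM ∩ ({10} : Finset (Fin 25))).card ≤ VY.card :=
    Finset.card_le_card (Finset.inter_subset_left.trans Finset.inter_subset_left)
  have ht10c : (VY ∩ VM ∩ ({10} : Finset (Fin 25))).card ≤ VM.card :=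
    Finset.card_le_card (Finset.inter_subset_left.trans Finset.inter_subset_right)
  -- per-block bounds / emptiness facts
  have hvcard : (H'.sup id).card = ((VX ∪ VY) ∪ VM).card := by rw [hsup]
  by_cases hx : X = ∅ <;> by_cases hy : Y = ∅ <;> by_cases hm : M = ∅
  · -- all empty: contradiction with 4 ≤ v
    exfalso
    rw [hsplit, hx, hy, hm] at hv
    simp at hv
  all_goals {
    first
      | (have hbx : X.card = 0 ∧ VX.card = 0 := by
            constructor <;> simp [hVX, hx])
      | (have hbx : 3 * X.card + 3 ≤ 2 * VX.card :=
            blk_bound edgX (by decide) bound_edgX X (blkX_eq ▸ hXsub) hx)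
    first
      | (have hby : Y.card = 0 ∧ VY.card = 0 := by
            constructor <;> simp [hVY, hy])
      | (have hby : 3 * Y.card + 3 ≤ 2 * VY.card :=
            blk_bound edgY (by decide) bound_edgY Y (blkY_eq ▸ hYsub) hy)
    first
      | (have hbm : M.card = 0 ∧ VM.card = 0 := by
            constructor <;> simp [hVM, hm])
      | (have hbm : 3 * M.card + 3 ≤ 2 * VM.card :=
            blk_bound edgM (by decide) bound_edgM M (blkM_eq ▸ hMsub) hm)
    omega
  }
/-- Claim 6.8: the 3-density `m₃` of the contracted backbone of an
absorber equals `2/3`; here the number of vertices of a subhypergraph `H'` (a subset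
of the edge set) is the number of vertices spanned by its edges, `(H'.sup id).card`. -/
theorem stmt_18 :
    (∀ H' ⊆ contractedBackbone, 4 ≤ (H'.sup id).card →
      ((H'.card : ℝ) - 1) / (((H'.sup id).card : ℝ) - 3) ≤ 2 / 3) ∧
    ∃ H' ⊆ contractedBackbone, 4 ≤ (H'.sup id).card ∧
      ((H'.card : ℝ) - 1) / (((H'.sup id).card : ℝ) - 3) = 2 / 3 := by
  constructor
  · intro H' hH' hv
    have h := key_nat H' hH' hv
    have hv3 : (0:ℝ) < ((H'.sup id).card : ℝ) - 3 := by
      have : (4:ℝ) ≤ ((H'.sup id).card : ℝ) := by exact_mod_cast hv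
      linarith
    rw [div_le_div_iff₀ hv3 (by norm_num)]
    have h' : (3 * H'.card + 3 : ℝ) ≤ 2 * ((H'.sup id).card : ℝ) := by exact_mod_cast h
    linarith
  · refine ⟨{({18, 19, 20} : Finset (Fin 25)), {20, 21, 22}, {19, 1, 21}}, ?_, ?_, ?_⟩
    · decide
    · decide
    · have h1 : (({({18, 19, 20} : Finset (Fin 25)), {20, 21, 22}, {19, 1, 21}} : Finset (Finset (Fin 25))).card) = 3 := by decide
      have h2 : ((({({18, 19, 20} : Finset (Fin 25)), {20, 21, 22}, {19, 1, 21}} : Finset (Finset (Fin 25))).sup id).card) = 6 := by decide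
      rw [h1, h2]
      norm_num
end

section
/- Let H be a 3-uniform hypergraph that is the union of two linear 3-uniform hypergraphs H_1 and H_2 whose vertex sets intersect in exactly one vertex (and which share no edges). If α ≥ 1/2 and m_3(H_i) ≤ α for i ∈ {1,2}, then m_3(H) ≤ α. -/
open Finset

variable {α : Type*} [DecidableEq α]

lemma key {V : Type*} [DecidableEq V] (H : Finset (Finset V)) (a : ℝ)
    (h3 : ∀ e ∈ H, e.card = 3)
    (hm : ∀ H' ⊆ H, 4 ≤ (H'.sup id).card →
      ((H'.card : ℝ) - 1) / (((H'.sup id).card : ℝ) - 3) ≤ a)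
    (H' : Finset (Finset V)) (hsub : H' ⊆ H) (hne : H'.Nonempty) :
    3 ≤ (H'.sup id).card ∧ ((H'.card : ℝ) - 1) ≤ a * (((H'.sup id).card : ℝ) - 3) := by
  obtain ⟨e, he⟩ := hne
  have hes : e ⊆ H'.sup id := Finset.le_sup (f := id) he
  have hv3 : 3 ≤ (H'.sup id).card := by
    have := Finset.card_le_card hes
    rwa [h3 e (hsub he)] at this
  refine ⟨hv3, ?_⟩
  rcases eq_or_lt_of_le (Finset.one_le_card.mpr ⟨e, he⟩) with h1 | h2
  · have hc1 : H'.card = 1 := h1.symm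
    obtain ⟨x, hx⟩ := Finset.card_eq_one.mp hc1
    have hxe : x = e := by rw [hx] at he; exact (Finset.mem_singleton.mp he).symm
    subst hxe
    rw [hx]
    simp [h3 x (hsub he)]
  · -- two distinct edges
    obtain ⟨f, hf, hfe⟩ := Finset.exists_mem_ne h2 e
    have hfs : f ⊆ H'.sup id := Finset.le_sup (f := id) hf
    have hcap : (e ∩ f).card ≤ 2 := by
      by_contra h
      push_neg at h
      have hle : (e ∩ f).card ≤ e.card := Finset.card_le_card inter_subset_left
      rw [h3 e (hsub he)] at hle
      have h3' : (e ∩ f).card = 3 := le_antisymm hle h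
      have hef : e ∩ f = e := Finset.eq_of_subset_of_card_le inter_subset_left
        (by rw [h3', h3 e (hsub he)])
      have : e ⊆ f := by rw [← hef]; exact inter_subset_right
      exact hfe (Finset.eq_of_subset_of_card_le this
        (by rw [h3 e (hsub he), h3 f (hsub hf)])).symm
    have hv4 : 4 ≤ (H'.sup id).card := by
      have hu : e ∪ f ⊆ H'.sup id := union_subset hes hfs
      have hc := Finset.card_union_add_card_inter e f
      rw [h3 e (hsub he), h3 f (hsub hf)] at hc
      have h4 : 4 ≤ (e ∪ f).card := by omega
      exact le_trans h4 (Finset.card_le_card hu)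
    have hpos : (0:ℝ) < ((H'.sup id).card : ℝ) - 3 := by
      have : (4:ℝ) ≤ ((H'.sup id).card : ℝ) := by exact_mod_cast hv4
      linarith
    have := hm H' hsub hv4
    rw [div_le_iff₀ hpos] at this
    linarith

/-- Claim A.1: if a 3-graph `H₁ ∪ H₂` is the union of two linear
3-graphs sharing exactly one vertex (and no edge), and `m₃(Hᵢ) ≤ a` for `i = 1, 2`
with `a ≥ 1/2`, then `m₃(H₁ ∪ H₂) ≤ a`. The vertex count of a subhypergraph `H'`
(a subset of the edge set) is the number of vertices spanned, `(H'.sup id).card`. -/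
theorem stmt_19 {V : Type*} [DecidableEq V] (H₁ H₂ : Finset (Finset V)) (a : ℝ)
    (h3 : ∀ e ∈ H₁ ∪ H₂, e.card = 3)
    (hlin₁ : ∀ e ∈ H₁, ∀ f ∈ H₁, e ≠ f → (e ∩ f).card ≤ 1)
    (hlin₂ : ∀ e ∈ H₂, ∀ f ∈ H₂, e ≠ f → (e ∩ f).card ≤ 1)
    (hvert : ((H₁.sup id) ∩ (H₂.sup id)).card = 1)
    (hedge : Disjoint H₁ H₂)
    (ha : 1 / 2 ≤ a)
    (hm₁ : ∀ H' ⊆ H₁, 4 ≤ (H'.sup id).card →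
      ((H'.card : ℝ) - 1) / (((H'.sup id).card : ℝ) - 3) ≤ a)
    (hm₂ : ∀ H' ⊆ H₂, 4 ≤ (H'.sup id).card →
      ((H'.card : ℝ) - 1) / (((H'.sup id).card : ℝ) - 3) ≤ a) :
    ∀ H' ⊆ H₁ ∪ H₂, 4 ≤ (H'.sup id).card →
      ((H'.card : ℝ) - 1) / (((H'.sup id).card : ℝ) - 3) ≤ a := by
  intro H' hsub hv4
  classical
  set A := H' ∩ H₁ with hAdef
  set B := H' ∩ H₂ with hBdef
  have hAB : H' = A ∪ B := by
    ext e
    simp only [hAdef, hBdef, Finset.mem_union, Finset.mem_inter]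
    constructor
    · intro he
      rcases Finset.mem_union.mp (hsub he) with h | h
      · exact Or.inl ⟨he, h⟩
      · exact Or.inr ⟨he, h⟩
    · rintro (⟨h, _⟩ | ⟨h, _⟩) <;> exact h
  rcases A.eq_empty_or_nonempty with hA | hA
  · have : H' ⊆ H₂ := by
      intro e he
      have := hAB ▸ he
      rw [hA] at this
      have : e ∈ B := by simpa using this
      exact (Finset.mem_inter.mp this).2
    exact hm₂ H' this hv4
  rcases B.eq_empty_or_nonempty with hB | hB
  · have : H' ⊆ H₁ := by
      intro e he
      have := hAB ▸ he
      rw [hB] at this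
      have : e ∈ A := by simpa using this
      exact (Finset.mem_inter.mp this).2
    exact hm₁ H' this hv4
  have hdisj : Disjoint A B :=
    hedge.mono Finset.inter_subset_right Finset.inter_subset_right
  have hcard : H'.card = A.card + B.card := by
    rw [hAB, Finset.card_union_of_disjoint hdisj]
  have hsupeq : H'.sup id = A.sup id ∪ B.sup id := by
    rw [hAB, Finset.sup_union, Finset.sup_eq_union]
  obtain ⟨hvA, heA⟩ := key H₁ a (fun e he => h3 e (Finset.mem_union_left _ he)) hm₁ A
    Finset.inter_subset_right hA
  obtain ⟨hvB, heB⟩ := key H₂ a (fun e he => h3 e (Finset.mem_union_right _ he)) hm₂ B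
    Finset.inter_subset_right hB
  have hint : ((A.sup id) ∩ (B.sup id)).card ≤ 1 := by
    calc ((A.sup id) ∩ (B.sup id)).card
        ≤ ((H₁.sup id) ∩ (H₂.sup id)).card := by
          apply Finset.card_le_card
          exact Finset.inter_subset_inter
            (Finset.sup_mono Finset.inter_subset_right)
            (Finset.sup_mono Finset.inter_subset_right)
      _ = 1 := hvert
  have hvsum : (H'.sup id).card + ((A.sup id) ∩ (B.sup id)).card
      = (A.sup id).card + (B.sup id).card := by
    rw [hsupeq]
    exact Finset.card_union_add_card_inter _ _
  have hvN : (A.sup id).card + (B.sup id).card ≤ (H'.sup id).card + 1 := by omega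
  have hpos : (0:ℝ) < ((H'.sup id).card : ℝ) - 3 := by
    have : (4:ℝ) ≤ ((H'.sup id).card : ℝ) := by exact_mod_cast hv4
    linarith
  rw [div_le_iff₀ hpos]
  have ec : (H'.card : ℝ) = (A.card : ℝ) + (B.card : ℝ) := by exact_mod_cast hcard
  have vs : ((A.sup id).card : ℝ) + ((B.sup id).card : ℝ) ≤ ((H'.sup id).card : ℝ) + 1 := by
    exact_mod_cast hvN
  have ha0 : (0:ℝ) ≤ a := le_trans (by norm_num) ha
  have key2 : a * (((A.sup id).card : ℝ) + ((B.sup id).card : ℝ) - 6)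
      ≤ a * (((H'.sup id).card : ℝ) - 5) :=
    mul_le_mul_of_nonneg_left (by linarith) ha0
  nlinarith [heA, heB, key2, ha, ec]
end
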